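/- arXiv:2002.05575 — 5 statements merged into one kernel-verified Lean document; each statement's English description precedes it below -/
import Mathlib

section
/- The four functions w_ℓ = λ_i λ_j λ_k ∇λ_ℓ, ℓ = 1,...,4, on a nondegenerate tetrahedron are linearly independent over ℝ. -/
noncomputable section
open MeasureTheory Finset

abbrev V3 : Type := Fin 3 → ℝ

def dot3 (a b : V3) : ℝ := ∑ i, a i * b i

def pd (f : V3 → ℝ) (i : Fin 3) (x : V3) : ℝ :=
  fderiv ℝ f x (fun j => if j = i then (1:ℝ) else 0)

def curl3 (u : V3 → V3) (x : V3) : V3 :=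
  ![pd (fun y => u y 2) 1 x - pd (fun y => u y 1) 2 x,
    pd (fun y => u y 0) 2 x - pd (fun y => u y 2) 0 x,
    pd (fun y => u y 1) 0 x - pd (fun y => u y 0) 1 x]

/-- The four functions `w_ℓ = λ_i λ_j λ_k ∇λ_ℓ` are linearly independent over ℝ. -/
theorem stmt_3 (v : Fin 4 → V3) (hv : AffineIndependent ℝ v)
    (lam : Fin 4 → V3 → ℝ) (grad : Fin 4 → V3) (c : Fin 4 → ℝ)
    (hlam : ∀ i x, lam i x = dot3 (grad i) x + c i)
    (hdelta : ∀ i j, lam i (v j) = if i = j then (1:ℝ) else 0)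
    (hsum : ∀ x, ∑ i, lam i x = 1)
    (w : Fin 4 → V3 → V3)
    (hw : ∀ ℓ x, w ℓ x = (∏ m ∈ univ.erase ℓ, lam m x) • grad ℓ) :
    LinearIndependent ℝ w := by
  rw [Fintype.linearIndependent_iff]
  intro g hg
  set p : Fin 4 → V3 → ℝ := fun ℓ x => ∏ m ∈ univ.erase ℓ, lam m x with hp
  -- dot product of grad i with v j
  have hdotv : ∀ i j, dot3 (grad i) (v j) = (if i = j then (1:ℝ) else 0) - c i := by
    intro i j
    have h1 := hlam i (v j)
    rw [hdelta] at h1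
    linarith
  -- pointwise vector equation
  have hpt : ∀ (x : V3) (k : Fin 3), ∑ i, g i * (p i x * grad i k) = 0 := by
    intro x k
    have h0 := congrFun (congrFun hg x) k
    simpa [Finset.sum_apply, Pi.smul_apply, hw, mul_assoc] using h0
  -- dot the equation with v j
  have hdot : ∀ (x : V3) (j : Fin 4),
      ∑ i, g i * p i x * ((if i = j then (1:ℝ) else 0) - c i) = 0 := by
    intro x j
    have h0 : ∑ k, (∑ i, g i * (p i x * grad i k)) * v j k = 0 := by
      simp [hpt x]
    calc ∑ i, g i * p i x * ((if i = j then (1:ℝ) else 0) - c i)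
          = ∑ i, g i * p i x * dot3 (grad i) (v j) := by
            apply Finset.sum_congr rfl; intro i _; rw [hdotv]
        _ = ∑ i, ∑ k, (g i * (p i x * grad i k)) * v j k := by
            apply Finset.sum_congr rfl; intro i _
            simp [dot3, Finset.mul_sum]; apply Finset.sum_congr rfl; intro k _; ring
        _ = ∑ k, (∑ i, g i * (p i x * grad i k)) * v j k := by
            rw [Finset.sum_comm]
            apply Finset.sum_congr rfl; intro k _
            rw [Finset.sum_mul]
        _ = 0 := h0
  -- key: g j * p j x = g j' * p j' x for all x, j, j'
  have hkey : ∀ (x : V3) (j j' : Fin 4), g j * p j x = g j' * p j' x := by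
    intro x j j'
    have h1 := hdot x j
    have h2 := hdot x j'
    have h3 : ∑ i, g i * p i x * ((if i = j then (1:ℝ) else 0) - c i)
        - ∑ i, g i * p i x * ((if i = j' then (1:ℝ) else 0) - c i) = 0 := by
      rw [h1, h2]; ring
    rw [← Finset.sum_sub_distrib] at h3
    have h4 : ∑ i, (g i * p i x * (if i = j then (1:ℝ) else 0)
        - g i * p i x * (if i = j' then (1:ℝ) else 0)) = 0 := by
      calc ∑ i, (g i * p i x * (if i = j then (1:ℝ) else 0)
              - g i * p i x * (if i = j' then (1:ℝ) else 0))
          = ∑ i, (g i * p i x * ((if i = j then (1:ℝ) else 0) - c i)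
              - g i * p i x * ((if i = j' then (1:ℝ) else 0) - c i)) :=
            Finset.sum_congr rfl (fun i _ => by ring)
        _ = 0 := h3
    rw [Finset.sum_sub_distrib] at h4
    simp only [mul_ite, mul_one, mul_zero, Finset.sum_ite_eq', Finset.mem_univ,
      if_true] at h4
    linarith
  -- affine combinations
  have haff : ∀ (t : Fin 4 → ℝ), (∑ j, t j) = 1 →
      ∀ i, lam i (fun k => ∑ j, t j * v j k) = t i := by
    intro t ht i
    rw [hlam]
    have hd : dot3 (grad i) (fun k => ∑ j, t j * v j k)
        = ∑ j, t j * dot3 (grad i) (v j) := by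
      simp only [dot3, Finset.mul_sum]
      rw [Finset.sum_comm]
      apply Finset.sum_congr rfl; intro j _
      apply Finset.sum_congr rfl; intro k _; ring
    rw [hd]
    simp only [hdotv, mul_sub, Finset.sum_sub_distrib, mul_ite, mul_one, mul_zero,
      Finset.sum_ite_eq', Finset.sum_ite_eq, Finset.mem_univ, if_true, ← Finset.sum_mul, ht]
    ring
  -- barycenter
  set b : V3 := fun k => ∑ j, (fun _ : Fin 4 => (1/4 : ℝ)) j * v j k with hbdef
  have hb : ∀ i, lam i b = 1/4 := by
    intro i
    exact haff (fun _ => 1/4) (by norm_num [Fin.sum_univ_four]) i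
  -- point with weights (1/2, 1/6, 1/6, 1/6)
  set t : Fin 4 → ℝ := ![1/2, 1/6, 1/6, 1/6] with htdef
  set q : V3 := fun k => ∑ j, t j * v j k with hqdef
  have hq : ∀ i, lam i q = t i := by
    intro i
    exact haff t (by norm_num [htdef, Fin.sum_univ_four, Matrix.cons_val_two, Matrix.cons_val_three]) i
  -- products at b
  have hpb : ∀ ℓ, p ℓ b = (1/4)^3 := by
    intro ℓ
    show (∏ m ∈ univ.erase ℓ, lam m b) = (1/4)^3
    rw [Finset.prod_congr rfl (fun m _ => hb m), Finset.prod_const,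
      Finset.card_erase_of_mem (Finset.mem_univ ℓ)]
    norm_num
  -- erase sets
  have he0 : (univ.erase (0 : Fin 4)) = {1, 2, 3} := by decide
  have he1 : (univ.erase (1 : Fin 4)) = {0, 2, 3} := by decide
  have hp0 : p 0 q = (1/6)^3 := by
    simp only [hp, he0]
    rw [Finset.prod_insert (by decide), Finset.prod_insert (by decide),
      Finset.prod_singleton]
    simp [hq, htdef]; norm_num
  have hp1 : p 1 q = (1/2) * (1/6)^2 := by
    simp only [hp, he1]
    rw [Finset.prod_insert (by decide), Finset.prod_insert (by decide),
      Finset.prod_singleton]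
    simp [hq, htdef]; norm_num
  -- conclude g 0 = g i for all i, from barycenter
  have hgb : ∀ j, g j = g 0 := by
    intro j
    have := hkey b j 0
    rw [hpb j, hpb 0] at this
    have h64 : ((1:ℝ)/4)^3 ≠ 0 := by norm_num
    field_simp at this
    linarith [this]
  have hg0 : g 0 = 0 := by
    have := hkey q 0 1
    rw [hp0, hp1, hgb 1] at this
    nlinarith [this]
  intro i
  rw [hgb i, hg0]
end
end

section
/- The curls of the four functions w_ℓ = λ_i λ_j λ_k ∇λ_ℓ, ℓ = 1,...,4, span a 3-dimensional subspace: any three of them are linearly independent, but Σ_ℓ curl w_ℓ = 0. -/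
noncomputable section
open MeasureTheory Finset

/-- The continuous linear map `x ↦ dot3 g x`. -/
def dmap (g : V3) : V3 →L[ℝ] ℝ :=
  ∑ i, g i • (ContinuousLinearMap.proj i : V3 →L[ℝ] ℝ)

lemma dmap_apply (g x : V3) : dmap g x = dot3 g x := by
  simp [dmap, dot3, ContinuousLinearMap.sum_apply]

lemma hasFDerivAt_affine (g : V3) (c : ℝ) (x : V3) :
    HasFDerivAt (fun y => dot3 g y + c) (dmap g) x := by
  have h : HasFDerivAt (fun y : V3 => dot3 g y) (dmap g) x := by
    have : ∀ y : V3, dot3 g y = ∑ i, g i * y i := fun y => rfl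
    simp only [this]
    unfold dmap
    apply HasFDerivAt.fun_sum
    intro i _
    exact ((ContinuousLinearMap.proj i : V3 →L[ℝ] ℝ).hasFDerivAt (x := x)).const_mul (g i)
  exact h.add_const c

lemma dmap_basis (g : V3) (j : Fin 3) :
    dmap g (fun k => if k = j then (1:ℝ) else 0) = g j := by
  simp [dmap, ContinuousLinearMap.sum_apply, mul_ite]

/-- The curls of the four functions `w_ℓ` span a 3-dimensional space: any three
of them are linearly independent, but their sum vanishes. -/
theorem stmt_4 (v : Fin 4 → V3) (hv : AffineIndependent ℝ v)
    (lam : Fin 4 → V3 → ℝ) (grad : Fin 4 → V3) (c : Fin 4 → ℝ)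
    (hlam : ∀ i x, lam i x = dot3 (grad i) x + c i)
    (hdelta : ∀ i j, lam i (v j) = if i = j then (1:ℝ) else 0)
    (hsum : ∀ x, ∑ i, lam i x = 1)
    (w : Fin 4 → V3 → V3)
    (hw : ∀ ℓ x, w ℓ x = (∏ m ∈ univ.erase ℓ, lam m x) • grad ℓ) :
    (∀ s : Finset (Fin 4), s.card = 3 →
      LinearIndependent ℝ (fun ℓ : {a // a ∈ s} => fun x => curl3 (w ℓ) x)) ∧
    (∀ x, ∑ ℓ, curl3 (w ℓ) x = 0) := by
  -- derivative of lam
  have hlamd : ∀ m x, HasFDerivAt (lam m) (dmap (grad m)) x := by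
    intro m x
    have : lam m = fun y => dot3 (grad m) y + c m := funext fun y => hlam m y
    rw [this]
    exact hasFDerivAt_affine _ _ _
  -- derivative of the product
  have hF : ∀ (ℓ : Fin 4) (x : V3), HasFDerivAt (fun y => ∏ m ∈ univ.erase ℓ, lam m y)
      (∑ m ∈ univ.erase ℓ, (∏ k ∈ (univ.erase ℓ).erase m, lam k x) • dmap (grad m)) x := by
    intro ℓ x
    exact HasFDerivAt.finset_prod (fun m _ => hlamd m x)
  -- partial derivatives of components of w
  have hpd : ∀ (ℓ : Fin 4) (a b : Fin 3) (x : V3),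
      pd (fun y => w ℓ y a) b x =
      (∑ m ∈ univ.erase ℓ, (∏ k ∈ (univ.erase ℓ).erase m, lam k x) * grad m b) * grad ℓ a := by
    intro ℓ a b x
    have h1 : (fun y => w ℓ y a) = fun y => (∏ m ∈ univ.erase ℓ, lam m y) * grad ℓ a := by
      funext y; rw [hw]; simp [Pi.smul_apply, smul_eq_mul]
    have h2 : HasFDerivAt (fun y => (∏ m ∈ univ.erase ℓ, lam m y) * grad ℓ a)
        ((grad ℓ a) • ∑ m ∈ univ.erase ℓ, (∏ k ∈ (univ.erase ℓ).erase m, lam k x) • dmap (grad m)) x :=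
      (hF ℓ x).mul_const (grad ℓ a)
    rw [h1]
    unfold pd
    rw [h2.fderiv]
    simp only [ContinuousLinearMap.smul_apply, ContinuousLinearMap.sum_apply,
      ContinuousLinearMap.smul_apply, smul_eq_mul, dmap_basis]
    rw [mul_comm]
  -- the curl formula
  have hcurl : ∀ (ℓ : Fin 4) (x : V3), curl3 (w ℓ) x =
      ∑ m ∈ univ.erase ℓ, (∏ k ∈ (univ.erase ℓ).erase m, lam k x) •
        (crossProduct (grad m) (grad ℓ)) := by
    intro ℓ x
    funext i
    simp only [Finset.sum_apply, Pi.smul_apply, smul_eq_mul, cross_apply]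
    fin_cases i <;>
      simp only [curl3, Fin.zero_eta, Fin.mk_one, Fin.isValue, show (⟨2, by norm_num⟩ : Fin 3) = 2 from rfl,
        Matrix.cons_val_zero, Matrix.cons_val_one, Matrix.head_cons,
        Matrix.cons_val_two, Matrix.tail_cons, hpd] <;>
    · rw [Finset.sum_mul, Finset.sum_mul, ← Finset.sum_sub_distrib]
      apply Finset.sum_congr rfl
      intro m _
      ring
  -- the curl formula over the full sum (diagonal term vanishes)
  have hcurl' : ∀ (ℓ : Fin 4) (x : V3), curl3 (w ℓ) x =
      ∑ m, (∏ k ∈ (univ.erase ℓ).erase m, lam k x) • (crossProduct (grad m) (grad ℓ)) := by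
    intro ℓ x
    rw [hcurl ℓ x, ← Finset.add_sum_erase _ _ (Finset.mem_univ ℓ)]
    simp [cross_self]
  -- dot products of grads with vertices
  have hdotv : ∀ m j, dot3 (grad m) (v j) = (if m = j then (1:ℝ) else 0) - c m := by
    intro m j
    have := hlam m (v j)
    rw [hdelta m j] at this
    linarith
  -- pairwise linear independence of grads, hence nonzero cross products
  have hcross : ∀ d ℓ : Fin 4, d ≠ ℓ → crossProduct (grad d) (grad ℓ) ≠ 0 := by
    intro d ℓ hdl
    rw [crossProduct_ne_zero_iff_linearIndependent]
    rw [LinearIndependent.pair_iff]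
    intro s t hst
    -- choose r different from d and ℓ
    obtain ⟨r, hr⟩ : ∃ r : Fin 4, r ≠ d ∧ r ≠ ℓ := by
      revert hdl
      have : ∀ d ℓ : Fin 4, ∃ r : Fin 4, r ≠ d ∧ r ≠ ℓ := by decide
      exact fun _ => this d ℓ
    have key : ∀ j, s * dot3 (grad d) (v j) + t * dot3 (grad ℓ) (v j) = 0 := by
      intro j
      have := congrFun hst
      have h3 : dot3 (s • grad d + t • grad ℓ) (v j) = 0 := by
        simp only [dot3]
        rw [← Finset.sum_const_zero (s := (univ : Finset (Fin 3)))]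
        apply Finset.sum_congr rfl
        intro i _
        rw [this i]; simp
      rw [show dot3 (s • grad d + t • grad ℓ) (v j)
          = s * dot3 (grad d) (v j) + t * dot3 (grad ℓ) (v j) by
        simp only [dot3, Finset.mul_sum, ← Finset.sum_add_distrib]
        apply Finset.sum_congr rfl; intro i _; simp; ring] at h3
      exact h3
    have e1 := key d
    have e2 := key ℓ
    have e3 := key r
    rw [hdotv, hdotv] at e1 e2 e3
    rw [if_pos rfl, if_neg (Ne.symm hdl)] at e1
    rw [if_neg hdl, if_pos rfl] at e2
    rw [if_neg (fun h : d = r => hr.1 h.symm), if_neg (fun h : ℓ = r => hr.2 h.symm)] at e3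
    constructor <;> linarith
  constructor
  · -- linear independence
    intro s hs
    -- key claim
    have key : ∀ a : Fin 4 → ℝ, (∀ x, ∑ ℓ, a ℓ • curl3 (w ℓ) x = 0) →
        ∀ ℓ d : Fin 4, d ≠ ℓ → a d = 0 → a ℓ = 0 := by
      intro a ha ℓ d hdl had
      -- the two other indices
      obtain ⟨p, q, hpq, hc⟩ : ∃ p q : Fin 4, p ≠ q ∧ ({ℓ, d}ᶜ : Finset (Fin 4)) = {p, q} := by
        have hcard : ({ℓ, d}ᶜ : Finset (Fin 4)).card = 2 := by
          rw [Finset.card_compl, Finset.card_insert_of_notMem (by simpa using Ne.symm hdl)]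
          simp
        exact Finset.card_eq_two.mp hcard
      have hp : p ≠ ℓ ∧ p ≠ d := by
        have : p ∈ ({ℓ, d}ᶜ : Finset (Fin 4)) := by rw [hc]; simp
        simpa using this
      have hq : q ≠ ℓ ∧ q ≠ d := by
        have : q ∈ ({ℓ, d}ᶜ : Finset (Fin 4)) := by rw [hc]; simp
        simpa using this
      have hcover : ∀ m : Fin 4, m = ℓ ∨ m = d ∨ m = p ∨ m = q := by
        intro m
        by_cases h1 : m = ℓ; · exact Or.inl h1
        by_cases h2 : m = d; · exact Or.inr (Or.inl h2)
        have : m ∈ ({ℓ, d}ᶜ : Finset (Fin 4)) := by simp [h1, h2]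
        rw [hc] at this
        simp at this
        tauto
      -- the midpoint of the edge pq
      set x0 : V3 := fun i => (v p i + v q i) / 2 with hx0
      have hlamx0 : ∀ m, lam m x0 =
          ((if m = p then (1:ℝ) else 0) + (if m = q then (1:ℝ) else 0)) / 2 := by
        intro m
        rw [hlam m x0]
        have : dot3 (grad m) x0 = (dot3 (grad m) (v p) + dot3 (grad m) (v q)) / 2 := by
          simp only [dot3, hx0]
          rw [← Finset.sum_add_distrib, Finset.sum_div]
          exact Finset.sum_congr rfl fun i _ => by ring
        rw [this, hdotv, hdotv]
        ring
      -- evaluate the linear combination at x0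
      have hz := ha x0
      simp only [hcurl'] at hz
      -- the individual terms
      set t : Fin 4 × Fin 4 → V3 := fun z =>
        a z.1 • ((∏ k ∈ (univ.erase z.1).erase z.2, lam k x0) •
          crossProduct (grad z.2) (grad z.1)) with ht
      have hz2 : ∑ z : Fin 4 × Fin 4, t z = 0 := by
        rw [Fintype.sum_prod_type]
        simpa only [ht, Finset.smul_sum] using hz
      have hlam0 : ∀ k : Fin 4, k ≠ p → k ≠ q → lam k x0 = 0 := by
        intro k h1 h2
        rw [hlamx0, if_neg h1, if_neg h2]
        norm_num
      have hvanish : ∀ z : Fin 4 × Fin 4, z ≠ (ℓ, d) → z ≠ (d, ℓ) → t z = 0 := by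
        rintro ⟨l', m⟩ h1 h2
        by_cases hlm : l' = m
        · simp [ht, hlm, cross_self]
        have hex : ∃ k0 ∈ (univ.erase l').erase m, lam k0 x0 = 0 := by
          by_cases hl1 : ℓ ≠ l' ∧ ℓ ≠ m
          · refine ⟨ℓ, Finset.mem_erase.mpr ⟨hl1.2, Finset.mem_erase.mpr ⟨hl1.1, Finset.mem_univ ℓ⟩⟩, ?_⟩
            exact hlam0 ℓ (fun h => hp.1 h.symm) (fun h => hq.1 h.symm)
          · push_neg at hl1
            have hd1 : d ≠ l' ∧ d ≠ m := by
              constructor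
              · intro hdleq
                by_cases hll : ℓ = l'
                · exact hdl (hdleq.trans hll.symm)
                · have hlm2 := hl1 hll
                  exact h2 (by rw [hdleq, hlm2])
              · intro hdm
                by_cases hll : ℓ = l'
                · exact h1 (by rw [← hll, hdm])
                · have hlm2 := hl1 hll
                  exact hdl (hdm.trans hlm2.symm)
            refine ⟨d, Finset.mem_erase.mpr ⟨hd1.2, Finset.mem_erase.mpr ⟨hd1.1, Finset.mem_univ d⟩⟩, ?_⟩
            exact hlam0 d (fun h => hp.2 h.symm) (fun h => hq.2 h.symm)
        obtain ⟨k0, hk0, hk0z⟩ := hex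
        have hz0 : (∏ k ∈ (univ.erase l').erase m, lam k x0) = 0 :=
          Finset.prod_eq_zero hk0 hk0z
        simp [ht, hz0]
      have hpair : t (ℓ, d) + t (d, ℓ) = 0 := by
        have hsum2 : ∑ z : Fin 4 × Fin 4, t z = t (ℓ, d) + t (d, ℓ) :=
          Finset.sum_eq_add_of_mem _ _ (Finset.mem_univ _) (Finset.mem_univ _)
            (by intro h; exact hdl (congrArg Prod.fst h).symm)
            (fun z _ hzz => hvanish z hzz.1 hzz.2)
        rw [← hsum2]; exact hz2
      have htd : t (d, ℓ) = 0 := by simp [ht, had]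
      have hset : ((univ.erase ℓ).erase d : Finset (Fin 4)) = {p, q} := by
        ext k
        simp only [Finset.mem_erase, Finset.mem_univ, and_true, Finset.mem_insert,
          Finset.mem_singleton]
        constructor
        · rintro ⟨hk1, hk2⟩
          rcases hcover k with h | h | h | h
          · exact absurd h hk2
          · exact absurd h hk1
          · exact Or.inl h
          · exact Or.inr h
        · rintro (rfl | rfl)
          · exact ⟨hp.2, hp.1⟩
          · exact ⟨hq.2, hq.1⟩
      have hprod : (∏ k ∈ (univ.erase ℓ).erase d, lam k x0) = 1 / 4 := by
        rw [hset, Finset.prod_pair hpq, hlamx0, hlamx0]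
        rw [if_pos rfl, if_neg hpq, if_neg (Ne.symm hpq), if_pos rfl]
        norm_num
      have htl : t (ℓ, d) = 0 := by rw [htd, add_zero] at hpair; exact hpair
      rw [ht] at htl
      simp only [hprod, smul_smul] at htl
      have := hcross d ℓ hdl
      rcases smul_eq_zero.mp htl with h | h
      · have : a ℓ = 0 ∨ (1/4 : ℝ) = 0 := mul_eq_zero.mp h
        rcases this with h' | h'
        · exact h'
        · norm_num at h'
      · exact absurd h this
    -- now conclude linear independence
    rw [Fintype.linearIndependent_iff]
    intro g hg
    set b : Fin 4 → ℝ := fun m => if h : m ∈ s then g ⟨m, h⟩ else 0 with hb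
    have hbsum : ∀ x, ∑ ℓ, b ℓ • curl3 (w ℓ) x = 0 := by
      intro x
      have h1 : ∑ ℓ ∈ s, b ℓ • curl3 (w ℓ) x = ∑ ℓ, b ℓ • curl3 (w ℓ) x :=
        Finset.sum_subset (Finset.subset_univ s) (fun m _ hm => by simp [hb, hm])
      rw [← h1]
      have h2 : ∑ ℓ ∈ s, b ℓ • curl3 (w ℓ) x
          = ∑ ℓ ∈ s.attach, g ℓ • curl3 (w ℓ) x := by
        rw [← Finset.sum_attach s (fun m => b m • curl3 (w m) x)]
        exact Finset.sum_congr rfl fun i _ => by simp [hb, i.2]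
      rw [h2]
      have := congrFun hg x
      simpa using this
    obtain ⟨d, hd⟩ : ∃ d : Fin 4, d ∉ s := by
      by_contra h
      push_neg at h
      have : (univ : Finset (Fin 4)) ⊆ s := fun m _ => h m
      have := Finset.card_le_card this
      simp [hs] at this
    intro i
    have hne : d ≠ (i : Fin 4) := fun h => hd (h ▸ i.2)
    have := key b hbsum i d hne (by simp [hb, hd])
    simpa [hb, i.2] using this

  · -- the sum of the curls vanishes
    intro x
    have hflat : ∑ ℓ, curl3 (w ℓ) x = ∑ z : Fin 4 × Fin 4,
        (∏ k ∈ (univ.erase z.1).erase z.2, lam k x) • crossProduct (grad z.2) (grad z.1) := by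
      rw [Fintype.sum_prod_type]
      exact Finset.sum_congr rfl fun ℓ _ => hcurl' ℓ x
    rw [hflat]
    apply Finset.sum_involution (fun z _ => (z.2, z.1))
    · rintro ⟨l, m⟩ _
      by_cases h : l = m
      · simp [h, cross_self]
      · have hset : ((univ.erase l).erase m : Finset (Fin 4)) = (univ.erase m).erase l := by
          rw [Finset.erase_right_comm]
        rw [hset, ← smul_add, cross_anticomm', smul_zero]
    · rintro ⟨l, m⟩ _ hne h
      apply hne
      by_cases hlm : l = m
      · subst hlm; simp [cross_self]
      · exfalso; apply hlm
        have := congrArg Prod.fst h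
        exact this.symm
    · rintro ⟨l, m⟩ _; simp
    · rintro ⟨l, m⟩ _; rfl
end
end

section
/- The modified basis function w_4* := w_4 + λ_1 λ_2 λ_3 (λ_2 − λ_1) ∇λ_4 is integrated exactly by the vertex–face-midpoint quadrature rule against constants, i.e. ∫_K (c · w_4*) dx = |K| ( Σ_{i=1}^4 (1/40) c·w_4*(v_i) + Σ_{i=1}^4 (9/40) c·w_4*(f_i) ) for every constant vector c ∈ ℝ³. -/
noncomputable section
open MeasureTheory Finset

/-! ### Auxiliary lemmas -/

section Aux

open Set intervalIntegral

lemma qd_dot3_smul_right (a : V3) (r : ℝ) (b : V3) : dot3 a (r • b) = r * dot3 a b := by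
  simp only [dot3, Pi.smul_apply, smul_eq_mul, Finset.mul_sum]
  exact Finset.sum_congr rfl fun i _ => by ring

lemma qd_dot3_add_right (a b c : V3) : dot3 a (b + c) = dot3 a b + dot3 a c := by
  simp [dot3, mul_add, Finset.sum_add_distrib]

lemma qd_dot3_sub_right (a b c : V3) : dot3 a (b - c) = dot3 a b - dot3 a c := by
  simp [dot3, mul_sub, Finset.sum_sub_distrib]

lemma qd_dot3_sum_right {ι : Type*} (a : V3) (s : Finset ι) (b : ι → V3) :
    dot3 a (∑ j ∈ s, b j) = ∑ j ∈ s, dot3 a (b j) := by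
  simp only [dot3, Finset.sum_apply, Finset.mul_sum]
  exact Finset.sum_comm

lemma qd_integ_poly (a₀ a₁ a₂ a₃ a₄ a₅ a₆ t : ℝ) :
    ∫ z in (0:ℝ)..t, (a₀ + a₁*z + a₂*z^2 + a₃*z^3 + a₄*z^4 + a₅*z^5 + a₆*z^6) =
      a₀*t + a₁*t^2/2 + a₂*t^3/3 + a₃*t^4/4 + a₄*t^5/5 + a₅*t^6/6 + a₆*t^7/7 := by
  have key : ∀ z : ℝ, HasDerivAt
      (fun z : ℝ => a₀*z + a₁/2*z^2 + a₂/3*z^3 + a₃/4*z^4 + a₄/5*z^5 + a₅/6*z^6 + a₆/7*z^7)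
      (a₀ + a₁*z + a₂*z^2 + a₃*z^3 + a₄*z^4 + a₅*z^5 + a₆*z^6) z := by
    intro z
    have h := (((((((hasDerivAt_id z).const_mul a₀).add
      ((hasDerivAt_pow 2 z).const_mul (a₁/2))).add
      ((hasDerivAt_pow 3 z).const_mul (a₂/3))).add
      ((hasDerivAt_pow 4 z).const_mul (a₃/4))).add
      ((hasDerivAt_pow 5 z).const_mul (a₄/5))).add
      ((hasDerivAt_pow 6 z).const_mul (a₅/6))).add
      ((hasDerivAt_pow 7 z).const_mul (a₆/7))
    convert h using 1
    · rfl
    · rfl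
    · funext y; simp only [Pi.add_apply, id]
    · push_cast; ring
  rw [integral_eq_sub_of_hasDerivAt (fun z _ => key z)]
  · ring
  · apply Continuous.intervalIntegrable
    continuity

lemma qd_seticc_poly (a₀ a₁ a₂ a₃ a₄ a₅ a₆ t : ℝ) (ht : 0 ≤ t) :
    ∫ z in Icc (0:ℝ) t, (a₀ + a₁*z + a₂*z^2 + a₃*z^3 + a₄*z^4 + a₅*z^5 + a₆*z^6) =
      a₀*t + a₁*t^2/2 + a₂*t^3/3 + a₃*t^4/4 + a₄*t^5/5 + a₅*t^6/6 + a₆*t^7/7 := by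
  rw [MeasureTheory.integral_Icc_eq_integral_Ioc, ← intervalIntegral.integral_of_le ht]
  exact qd_integ_poly _ _ _ _ _ _ _ _

/-- The reference integrand coming from `w₄*`. -/
def qd_g (x y z : ℝ) : ℝ := (1-x-y-z)*x*y*(2*x+y+z)

def qd_S3 : Set (ℝ×ℝ×ℝ) := {p | 0 ≤ p.1 ∧ 0 ≤ p.2.1 ∧ 0 ≤ p.2.2 ∧ p.1+p.2.1+p.2.2 ≤ 1}

def qd_S2 (x : ℝ) : Set (ℝ×ℝ) := {p | 0 ≤ p.1 ∧ 0 ≤ p.2 ∧ x+p.1+p.2 ≤ 1}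

lemma qd_S3_closed : IsClosed qd_S3 := by
  have h1 : IsClosed {p : ℝ×ℝ×ℝ | 0 ≤ p.1} := isClosed_le continuous_const continuous_fst
  have h2 : IsClosed {p : ℝ×ℝ×ℝ | 0 ≤ p.2.1} := isClosed_le continuous_const (by fun_prop)
  have h3 : IsClosed {p : ℝ×ℝ×ℝ | 0 ≤ p.2.2} := isClosed_le continuous_const (by fun_prop)
  have h4 : IsClosed {p : ℝ×ℝ×ℝ | p.1+p.2.1+p.2.2 ≤ 1} :=
    isClosed_le (by fun_prop) continuous_const
  have : qd_S3 = {p : ℝ×ℝ×ℝ | 0 ≤ p.1} ∩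
      ({p | 0 ≤ p.2.1} ∩ ({p | 0 ≤ p.2.2} ∩ {p | p.1+p.2.1+p.2.2 ≤ 1})) := by
    ext p; simp [qd_S3, and_assoc]
  rw [this]; exact h1.inter (h2.inter (h3.inter h4))

lemma qd_S3_compact : IsCompact qd_S3 := by
  refine IsCompact.of_isClosed_subset
    (isCompact_Icc (a := ((0:ℝ),(0:ℝ),(0:ℝ))) (b := (1,1,1))) qd_S3_closed ?_
  rintro ⟨x,y,z⟩ ⟨h1,h2,h3,h4⟩
  simp only [Set.mem_Icc, Prod.le_def]
  refine ⟨⟨h1,h2,h3⟩, ⟨by linarith, by linarith, by linarith⟩⟩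

lemma qd_S2_closed (x : ℝ) : IsClosed (qd_S2 x) := by
  have h1 : IsClosed {p : ℝ×ℝ | 0 ≤ p.1} := isClosed_le continuous_const continuous_fst
  have h2 : IsClosed {p : ℝ×ℝ | 0 ≤ p.2} := isClosed_le continuous_const continuous_snd
  have h3 : IsClosed {p : ℝ×ℝ | x+p.1+p.2 ≤ 1} := isClosed_le (by fun_prop) continuous_const
  have : qd_S2 x = {p : ℝ×ℝ | 0 ≤ p.1} ∩ ({p | 0 ≤ p.2} ∩ {p | x+p.1+p.2 ≤ 1}) := by
    ext p; simp [qd_S2, and_assoc]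
  rw [this]; exact h1.inter (h2.inter h3)

lemma qd_S2_compact (x : ℝ) : IsCompact (qd_S2 x) := by
  refine IsCompact.of_isClosed_subset
    (isCompact_Icc (a := ((0:ℝ),(0:ℝ))) (b := (1-x,1-x))) (qd_S2_closed x) ?_
  rintro ⟨y,z⟩ ⟨h1,h2,h3⟩
  simp only [Set.mem_Icc, Prod.le_def]
  exact ⟨⟨h1,h2⟩, ⟨by linarith, by linarith⟩⟩

lemma qd_iter_eq (g : ℝ → ℝ → ℝ → ℝ) (hg : Continuous fun p : ℝ×ℝ×ℝ => g p.1 p.2.1 p.2.2) :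
    ∫ q in qd_S3, g q.1 q.2.1 q.2.2 =
      ∫ x in Icc (0:ℝ) 1, ∫ y in Icc (0:ℝ) (1-x), ∫ z in Icc (0:ℝ) (1-x-y), g x y z := by
  have hS3m : MeasurableSet qd_S3 := qd_S3_closed.measurableSet
  have hint : IntegrableOn (fun q : ℝ×ℝ×ℝ => g q.1 q.2.1 q.2.2) qd_S3 :=
    hg.continuousOn.integrableOn_compact qd_S3_compact
  have hind : Integrable (qd_S3.indicator fun q : ℝ×ℝ×ℝ => g q.1 q.2.1 q.2.2) :=
    (integrable_indicator_iff hS3m).2 hint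
  rw [← MeasureTheory.integral_indicator hS3m]
  rw [show (volume : Measure (ℝ×ℝ×ℝ)) = (volume : Measure ℝ).prod volume from rfl]
  rw [integral_prod _ (by exact hind)]
  rw [← setIntegral_eq_integral_of_forall_compl_eq_zero
    (s := Icc (0:ℝ) 1)
    (f := fun x => ∫ p : ℝ×ℝ, qd_S3.indicator (fun q : ℝ×ℝ×ℝ => g q.1 q.2.1 q.2.2) (x, p)) ?_]
  swap
  · intro x hx
    have hz : ∀ p : ℝ×ℝ, qd_S3.indicator (fun q : ℝ×ℝ×ℝ => g q.1 q.2.1 q.2.2) (x, p) = 0 := by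
      intro p
      apply Set.indicator_of_notMem
      simp only [Set.mem_Icc, not_and_or, not_le] at hx
      rintro ⟨h1,h2,h3,h4⟩
      rcases hx with h|h
      · exact absurd h1 (not_le.2 h)
      · simp only at h4 h2 h3; linarith
    simp [hz]
  apply setIntegral_congr_fun measurableSet_Icc
  intro x hx
  simp only [Set.mem_Icc] at hx
  have e1 : ∀ p : ℝ×ℝ, qd_S3.indicator (fun q : ℝ×ℝ×ℝ => g q.1 q.2.1 q.2.2) (x, p)
      = (qd_S2 x).indicator (fun p : ℝ×ℝ => g x p.1 p.2) p := by
    intro p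
    by_cases h : p ∈ qd_S2 x
    · rw [Set.indicator_of_mem h, Set.indicator_of_mem]
      exact ⟨hx.1, h.1, h.2.1, h.2.2⟩
    · rw [Set.indicator_of_notMem h, Set.indicator_of_notMem]
      rintro ⟨h1,h2,h3,h4⟩
      exact h ⟨h2, h3, h4⟩
  simp only [e1]
  have hS2m : MeasurableSet (qd_S2 x) := (qd_S2_closed x).measurableSet
  have hgx : Continuous fun p : ℝ×ℝ => g x p.1 p.2 := by
    have : (fun p : ℝ×ℝ => g x p.1 p.2)
        = (fun q : ℝ×ℝ×ℝ => g q.1 q.2.1 q.2.2) ∘ (fun p : ℝ×ℝ => (x, p)) := rfl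
    rw [this]; exact hg.comp (continuous_const.prodMk continuous_id)
  have hind2 : Integrable ((qd_S2 x).indicator fun p : ℝ×ℝ => g x p.1 p.2) :=
    (integrable_indicator_iff hS2m).2 (hgx.continuousOn.integrableOn_compact (qd_S2_compact x))
  rw [show (volume : Measure (ℝ×ℝ)) = (volume : Measure ℝ).prod volume from rfl]
  rw [integral_prod _ (by exact hind2)]
  rw [← setIntegral_eq_integral_of_forall_compl_eq_zero
    (s := Icc (0:ℝ) (1-x))
    (f := fun y => ∫ z : ℝ, (qd_S2 x).indicator (fun p : ℝ×ℝ => g x p.1 p.2) (y, z)) ?_]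
  swap
  · intro y hy
    have hz : ∀ z : ℝ, (qd_S2 x).indicator (fun p : ℝ×ℝ => g x p.1 p.2) (y, z) = 0 := by
      intro z
      apply Set.indicator_of_notMem
      simp only [Set.mem_Icc, not_and_or, not_le] at hy
      rintro ⟨h1,h2,h3⟩
      simp only at h1 h2 h3
      rcases hy with h|h
      · exact absurd h1 (not_le.2 h)
      · linarith
    simp [hz]
  apply setIntegral_congr_fun measurableSet_Icc
  intro y hy
  simp only [Set.mem_Icc] at hy
  have e2 : ∀ z : ℝ, (qd_S2 x).indicator (fun p : ℝ×ℝ => g x p.1 p.2) (y, z)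
      = (Icc (0:ℝ) (1-x-y)).indicator (fun z => g x y z) z := by
    intro z
    by_cases h : z ∈ Icc (0:ℝ) (1-x-y)
    · simp only [Set.mem_Icc] at h
      rw [Set.indicator_of_mem (Set.mem_Icc.mpr h), Set.indicator_of_mem]
      exact ⟨hy.1, h.1, by simp only; linarith [h.2]⟩
    · rw [Set.indicator_of_notMem h, Set.indicator_of_notMem]
      rintro ⟨h1,h2,h3⟩
      simp only at h2 h3
      exact h (Set.mem_Icc.mpr ⟨h2, by linarith⟩)
  simp only [e2]
  rw [MeasureTheory.integral_indicator measurableSet_Icc]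

lemma qd_comp_g :
    (∫ x in Icc (0:ℝ) 1, ∫ y in Icc (0:ℝ) (1-x), ∫ z in Icc (0:ℝ) (1-x-y), qd_g x y z)
      = 1/720 := by
  have houter : ∀ x ∈ Icc (0:ℝ) 1,
      (∫ y in Icc (0:ℝ) (1-x), ∫ z in Icc (0:ℝ) (1-x-y), qd_g x y z)
        = x*(x*(1-x)^4/12 + (1-x)^5/40) := by
    intro x hx; rw [Set.mem_Icc] at hx
    have hy : ∀ y ∈ Icc (0:ℝ) (1-x), (∫ z in Icc (0:ℝ) (1-x-y), qd_g x y z)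
        = x*y*((1-x-y)^2*(2*x+y)/2 + (1-x-y)^3/6) := by
      intro y hy; rw [Set.mem_Icc] at hy
      have h0 : (0:ℝ) ≤ 1-x-y := by linarith [hy.2]
      have hfe : (fun z => qd_g x y z) = fun z =>
          (x*y*((1-x-y)*(2*x+y))) + (x*y*(1-3*x-2*y))*z + (-(x*y))*z^2
            + 0*z^3 + 0*z^4 + 0*z^5 + 0*z^6 := by
        funext z; simp only [qd_g]; ring
      rw [hfe, qd_seticc_poly _ _ _ _ _ _ _ _ h0]; ring
    rw [setIntegral_congr_fun measurableSet_Icc hy]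
    have h0 : (0:ℝ) ≤ 1-x := by linarith [hx.2]
    have hfe : (fun y : ℝ => x*y*((1-x-y)^2*(2*x+y)/2 + (1-x-y)^3/6)) = fun y =>
        0 + (x*(x*(1-x)^2 + (1-x)^3/6))*y + (x*(-2*(1-x)*x))*y^2 + (x*(x-(1-x)/2))*y^3
          + (x*(1/3))*y^4 + 0*y^5 + 0*y^6 := by
      funext y; ring
    rw [hfe, qd_seticc_poly _ _ _ _ _ _ _ _ h0]; ring
  rw [setIntegral_congr_fun measurableSet_Icc houter]
  have hfe : (fun x : ℝ => x*(x*(1-x)^4/12 + (1-x)^5/40)) = fun x =>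
      0 + (1/40)*x + (-(1/24))*x^2 + (-(1/12))*x^3 + (1/4)*x^4 + (-(5/24))*x^5
        + (7/120)*x^6 := by
    funext x; ring
  rw [hfe, qd_seticc_poly _ _ _ _ _ _ _ _ (by norm_num : (0:ℝ) ≤ 1)]; norm_num

lemma qd_comp_one :
    (∫ x in Icc (0:ℝ) 1, ∫ y in Icc (0:ℝ) (1-x), ∫ z in Icc (0:ℝ) (1-x-y), (1:ℝ)) = 1/6 := by
  have houter : ∀ x ∈ Icc (0:ℝ) 1,
      (∫ y in Icc (0:ℝ) (1-x), ∫ z in Icc (0:ℝ) (1-x-y), (1:ℝ)) = (1-x)^2/2 := by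
    intro x hx; rw [Set.mem_Icc] at hx
    have hy : ∀ y ∈ Icc (0:ℝ) (1-x), (∫ z in Icc (0:ℝ) (1-x-y), (1:ℝ)) = 1-x-y := by
      intro y hy; rw [Set.mem_Icc] at hy
      have h0 : (0:ℝ) ≤ 1-x-y := by linarith [hy.2]
      have hfe : (fun _ : ℝ => (1:ℝ)) = fun z : ℝ =>
          1 + 0*z + 0*z^2 + 0*z^3 + 0*z^4 + 0*z^5 + 0*z^6 := by funext z; ring
      rw [hfe, qd_seticc_poly _ _ _ _ _ _ _ _ h0]; ring
    rw [setIntegral_congr_fun measurableSet_Icc hy]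
    have h0 : (0:ℝ) ≤ 1-x := by linarith [hx.2]
    have hfe : (fun y : ℝ => 1-x-y) = fun y : ℝ =>
        (1-x) + (-1)*y + 0*y^2 + 0*y^3 + 0*y^4 + 0*y^5 + 0*y^6 := by funext y; ring
    rw [hfe, qd_seticc_poly _ _ _ _ _ _ _ _ h0]; ring
  rw [setIntegral_congr_fun measurableSet_Icc houter]
  have hfe : (fun x : ℝ => (1-x)^2/2) = fun x : ℝ =>
      (1/2) + (-1)*x + (1/2)*x^2 + 0*x^3 + 0*x^4 + 0*x^5 + 0*x^6 := by funext x; ring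
  rw [hfe, qd_seticc_poly _ _ _ _ _ _ _ _ (by norm_num : (0:ℝ) ≤ 1)]; norm_num

/-! #### Transport from `Fin 3 → ℝ` to `ℝ × ℝ × ℝ` -/

def qd_SS : Set (Fin 3 → ℝ) := {y | (∀ i, 0 ≤ y i) ∧ ∑ i, y i ≤ 1}

def qd_eps : (Fin 3 → ℝ) ≃ᵐ ℝ × ℝ × ℝ :=
  (MeasurableEquiv.piFinSuccAbove (fun _ : Fin 3 => ℝ) 0).trans
    ((MeasurableEquiv.refl ℝ).prodCongr
      ((MeasurableEquiv.piFinSuccAbove (fun _ : Fin 2 => ℝ) 0).trans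
        ((MeasurableEquiv.refl ℝ).prodCongr (MeasurableEquiv.funUnique (Fin 1) ℝ))))

lemma qd_eps_apply (y : Fin 3 → ℝ) : qd_eps y = (y 0, y 1, y 2) := by
  simp [qd_eps, MeasurableEquiv.piFinSuccAbove, MeasurableEquiv.prodCongr,
    MeasurableEquiv.funUnique, MeasurableEquiv.trans, Fin.succAbove]
  constructor
  · rfl
  constructor <;> rfl

lemma qd_eps_mp : MeasurePreserving qd_eps volume volume := by
  have h1 := MeasureTheory.volume_preserving_piFinSuccAbove (fun _ : Fin 3 => ℝ) 0
  have h2 := MeasureTheory.volume_preserving_piFinSuccAbove (fun _ : Fin 2 => ℝ) 0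
  have h3 := MeasureTheory.volume_preserving_funUnique (Fin 1) ℝ
  have h4 : MeasurePreserving (Prod.map (id : ℝ → ℝ)
      ⇑(MeasurableEquiv.funUnique (Fin 1) ℝ)) volume volume :=
    (MeasurePreserving.id volume).prod h3
  have h5 : MeasurePreserving (Prod.map (id : ℝ → ℝ)
      ((Prod.map (id : ℝ → ℝ) ⇑(MeasurableEquiv.funUnique (Fin 1) ℝ)) ∘
        ⇑(MeasurableEquiv.piFinSuccAbove (fun _ : Fin 2 => ℝ) 0))) volume volume :=
    (MeasurePreserving.id volume).prod (h4.comp h2)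
  have heq : ⇑qd_eps = (Prod.map (id : ℝ → ℝ)
      ((Prod.map (id : ℝ → ℝ) ⇑(MeasurableEquiv.funUnique (Fin 1) ℝ)) ∘
        ⇑(MeasurableEquiv.piFinSuccAbove (fun _ : Fin 2 => ℝ) 0))) ∘
      ⇑(MeasurableEquiv.piFinSuccAbove (fun _ : Fin 3 => ℝ) 0) := rfl
  rw [heq]
  exact h5.comp h1

lemma qd_SS_eq_preimage : qd_SS = qd_eps ⁻¹' qd_S3 := by
  ext y
  simp only [qd_SS, qd_S3, mem_setOf_eq, Set.mem_preimage, qd_eps_apply]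
  constructor
  · rintro ⟨h1, h2⟩
    exact ⟨h1 0, h1 1, h1 2, by rwa [Fin.sum_univ_three] at h2⟩
  · rintro ⟨h1, h2, h3, h4⟩
    refine ⟨fun i => ?_, by rwa [Fin.sum_univ_three]⟩
    fin_cases i <;> assumption

lemma qd_SS_meas : MeasurableSet qd_SS :=
  qd_SS_eq_preimage ▸ qd_eps.measurable qd_S3_closed.measurableSet

lemma qd_transport (g : ℝ → ℝ → ℝ → ℝ) :
    (∫ y in qd_SS, g (y 0) (y 1) (y 2)) = ∫ q in qd_S3, g q.1 q.2.1 q.2.2 := by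
  have hS3m : MeasurableSet qd_S3 := qd_S3_closed.measurableSet
  rw [← MeasureTheory.integral_indicator qd_SS_meas, ← MeasureTheory.integral_indicator hS3m]
  rw [← qd_eps_mp.integral_comp qd_eps.measurableEmbedding]
  congr 1
  funext y
  have hmem : y ∈ qd_SS ↔ qd_eps y ∈ qd_S3 := by rw [qd_SS_eq_preimage]; rfl
  by_cases h : y ∈ qd_SS
  · rw [Set.indicator_of_mem h, Set.indicator_of_mem (hmem.1 h), qd_eps_apply]
  · rw [Set.indicator_of_notMem h, Set.indicator_of_notMem (fun hc => h (hmem.2 hc))]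

lemma qd_vol_SS : (volume qd_SS).toReal = 1/6 := by
  have h := qd_transport (fun _ _ _ => (1:ℝ))
  rw [qd_iter_eq (fun _ _ _ => (1:ℝ)) (by continuity), qd_comp_one] at h
  rw [setIntegral_const] at h
  simpa [Measure.real] using h

lemma qd_int_SS_g : (∫ y in qd_SS, qd_g (y 0) (y 1) (y 2)) = 1/720 := by
  rw [qd_transport qd_g]
  rw [qd_iter_eq qd_g (by unfold qd_g; fun_prop), qd_comp_g]

/-! #### The reference simplex as a convex hull -/

def qd_ee : Fin 4 → V3 := Fin.cons 0 (fun i => Pi.single i (1:ℝ))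

lemma qd_hull_eq : convexHull ℝ (Set.range qd_ee) = qd_SS := by
  apply le_antisymm
  · apply convexHull_min
    · rintro _ ⟨j, rfl⟩
      refine Fin.cases ?_ (fun i => ?_) j
      · refine ⟨fun i => ?_, ?_⟩
        · simp [qd_ee]
        · simp [qd_ee, Fin.sum_univ_three]
      · rw [show qd_ee i.succ = Pi.single i (1:ℝ) from Fin.cons_succ _ _ _]
        refine ⟨fun k => ?_, ?_⟩
        · rw [Pi.single_apply]; split <;> norm_num
        · rw [Finset.sum_pi_single']; simp
    · have h1 : Convex ℝ {y : Fin 3 → ℝ | ∀ i, 0 ≤ y i} := by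
        have : {y : Fin 3 → ℝ | ∀ i, 0 ≤ y i} = Set.pi Set.univ (fun _ => Set.Ici 0) := by
          ext y; simp [Set.mem_pi, Pi.le_def]
        rw [this]; exact convex_pi (fun i _ => convex_Ici 0)
      have h2 : Convex ℝ {y : Fin 3 → ℝ | ∑ i, y i ≤ 1} :=
        convex_halfSpace_le ⟨fun a b => Finset.sum_add_distrib,
          fun r a => by simp [Finset.mul_sum]⟩ 1
      have : qd_SS = {y : Fin 3 → ℝ | ∀ i, 0 ≤ y i} ∩ {y | ∑ i, y i ≤ 1} := by
        ext y; simp only [qd_SS, Set.mem_setOf_eq, Set.mem_inter_iff]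
      rw [this]; exact h1.inter h2
  · rintro y ⟨h0, h1⟩
    set w : Fin 4 → ℝ := Fin.cons (1 - ∑ i, y i) y with hw
    have hw0 : ∀ j ∈ (univ : Finset (Fin 4)), 0 ≤ w j := by
      intro j _
      refine Fin.cases ?_ (fun i => ?_) j
      · rw [hw, Fin.cons_zero]; linarith
      · rw [hw, Fin.cons_succ]; exact h0 i
    have hwsum : ∑ j, w j = 1 := by
      rw [hw, Fin.sum_cons]; ring
    have hmem := Finset.centerMass_mem_convexHull (univ : Finset (Fin 4))
      (w := w) (z := qd_ee) (s := Set.range qd_ee) hw0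
      (by rw [hwsum]; norm_num) (fun j _ => Set.mem_range_self j)
    have hcm : (univ : Finset (Fin 4)).centerMass w qd_ee = y := by
      rw [Finset.centerMass, hwsum]
      rw [inv_one, one_smul, Fin.sum_univ_succ]
      rw [show qd_ee 0 = 0 from Fin.cons_zero _ _, smul_zero, zero_add]
      have : ∀ i : Fin 3, w i.succ • qd_ee i.succ = Pi.single i (y i) := by
        intro i
        rw [hw, Fin.cons_succ, show qd_ee i.succ = Pi.single i (1:ℝ) from Fin.cons_succ _ _ _]
        funext k
        simp [Pi.single_apply, mul_ite]
      simp_rw [this]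
      exact Finset.univ_sum_single y
    rwa [hcm] at hmem

end Aux

/-- The modified basis function `w_4* = λ_1 λ_2 λ_3 (1 + λ_2 - λ_1) ∇λ_4` is
integrated exactly against constant vector fields by the
vertex–face-barycenter quadrature rule. -/
theorem stmt_5 (v : Fin 4 → V3) (hv : AffineIndependent ℝ v)
    (f : Fin 4 → V3) (hf : ∀ ℓ, f ℓ = (3:ℝ)⁻¹ • ∑ m ∈ univ.erase ℓ, v m)
    (lam : Fin 4 → V3 → ℝ) (grad : Fin 4 → V3) (cst : Fin 4 → ℝ)
    (hlam : ∀ i x, lam i x = dot3 (grad i) x + cst i)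
    (hdelta : ∀ i j, lam i (v j) = if i = j then (1:ℝ) else 0)
    (hsum : ∀ x, ∑ i, lam i x = 1)
    (w4s : V3 → V3)
    (hw4s : ∀ x, w4s x =
      (lam 0 x * lam 1 x * lam 2 x * (1 + lam 1 x - lam 0 x)) • grad 3) :
    ∀ c : V3,
      ∫ x in convexHull ℝ (Set.range v), dot3 c (w4s x) =
        (volume (convexHull ℝ (Set.range v))).toReal *
          (∑ i, (1/40 : ℝ) * dot3 c (w4s (v i)) +
           ∑ i, (9/40 : ℝ) * dot3 c (w4s (f i))) := by
  intro c
  classical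
  -- values of the barycentric coordinates at the face barycenters
  have hlamf : ∀ m ℓ : Fin 4, lam m (f ℓ) = if m = ℓ then 0 else 1/3 := by
    intro m ℓ
    have hdotv : ∀ k, dot3 (grad m) (v k) = lam m (v k) - cst m := fun k => by
      rw [hlam m (v k)]; ring
    rw [hlam, hf, qd_dot3_smul_right, qd_dot3_sum_right]
    have hterm : ∀ k ∈ univ.erase ℓ, dot3 (grad m) (v k)
        = (if m = k then (1:ℝ) else 0) - cst m := by
      intro k _; rw [hdotv, hdelta]
    rw [Finset.sum_congr rfl hterm, Finset.sum_sub_distrib, Finset.sum_const,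
      Finset.card_erase_of_mem (Finset.mem_univ _)]
    have hsum_ite : (∑ k ∈ univ.erase ℓ, if m = k then (1:ℝ) else 0)
        = if m = ℓ then 0 else 1 := by
      rw [Finset.sum_erase_eq_sub (Finset.mem_univ ℓ), Finset.sum_ite_eq]
      simp only [Finset.mem_univ, if_true]
      by_cases h : m = ℓ <;> simp [h]
    rw [hsum_ite]
    have hcard : (Fintype.card (Fin 4) - 1 : ℕ) = 3 := by simp
    rw [Finset.card_univ, hcard]
    by_cases h : m = ℓ <;> simp [h, nsmul_eq_mul] <;> ring
  -- vertex values vanish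
  have hvert : ∀ i, dot3 c (w4s (v i)) = 0 := by
    intro i
    rw [hw4s, qd_dot3_smul_right]
    by_cases h : i = 0
    · subst h; rw [hdelta 1 0, if_neg (by decide)]; ring
    · rw [hdelta 0 i, if_neg (fun hh => h hh.symm)]; ring
  -- face values
  have hface : ∑ i, (9/40 : ℝ) * dot3 c (w4s (f i)) = (1/120) * dot3 c (grad 3) := by
    have h0 : dot3 c (w4s (f 0)) = 0 := by
      rw [hw4s, qd_dot3_smul_right, show lam 0 (f 0) = 0 from by rw [hlamf, if_pos rfl]]; ring
    have h1 : dot3 c (w4s (f 1)) = 0 := by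
      rw [hw4s, qd_dot3_smul_right, show lam 1 (f 1) = 0 from by rw [hlamf, if_pos rfl]]; ring
    have h2 : dot3 c (w4s (f 2)) = 0 := by
      rw [hw4s, qd_dot3_smul_right, show lam 2 (f 2) = 0 from by rw [hlamf, if_pos rfl]]; ring
    have h3 : dot3 c (w4s (f 3)) = (1/27) * dot3 c (grad 3) := by
      rw [hw4s, qd_dot3_smul_right,
        show lam 0 (f 3) = 1/3 from by rw [hlamf, if_neg (by decide)],
        show lam 1 (f 3) = 1/3 from by rw [hlamf, if_neg (by decide)],
        show lam 2 (f 3) = 1/3 from by rw [hlamf, if_neg (by decide)]]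
      ring
    rw [Fin.sum_univ_four, h0, h1, h2, h3]; ring
  -- the parametrization of the tetrahedron over the reference simplex
  set u : Fin 3 → V3 := fun i => v i.succ - v 0 with hu
  set Llin : V3 →ₗ[ℝ] V3 := (Matrix.of fun i j => u j i).mulVecLin with hLlin
  have hLapp : ∀ y : V3, Llin y = ∑ j, y j • u j := by
    intro y; funext k
    simp only [hLlin, Matrix.mulVecLin_apply, Matrix.mulVec, dotProduct,
      Matrix.of_apply, Finset.sum_apply, Pi.smul_apply, smul_eq_mul]
    exact Finset.sum_congr rfl fun j _ => mul_comm _ _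
  set T : V3 → V3 := fun y => v 0 + Llin y with hT
  have hli : LinearIndependent ℝ u := by
    have hli0 := (affineIndependent_iff_linearIndependent_vsub ℝ v 0).mp hv
    have hemb : Function.Injective
        (fun i : Fin 3 => (⟨i.succ, Fin.succ_ne_zero i⟩ : {x : Fin 4 // x ≠ 0})) := by
      intro a b hab
      exact Fin.succ_injective _ (congrArg Subtype.val hab)
    have hueq : u = (fun s : {x : Fin 4 // x ≠ 0} => v ↑s -ᵥ v 0) ∘
        (fun i : Fin 3 => (⟨i.succ, Fin.succ_ne_zero i⟩ : {x : Fin 4 // x ≠ 0})) := by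
      funext i; rw [hu]; rfl
    rw [hueq]
    exact hli0.comp _ hemb
  have hinj : Function.Injective Llin := by
    rw [Fintype.linearIndependent_iff] at hli
    intro a b hab
    have h1 : ∀ j, (a - b) j = 0 := by
      apply hli
      rw [← hLapp (a - b), map_sub, hab, sub_self]
    funext k
    have := h1 k
    simpa [sub_eq_zero] using this
  have hTinj : Function.Injective T := by
    intro a b hab
    exact hinj (add_left_cancel (hab : v 0 + Llin a = v 0 + Llin b))
  set A : V3 →ᵃ[ℝ] V3 := ⟨T, Llin, fun p q => by simp [hT, map_add]; abel⟩ with hA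
  have hAee : ∀ j, A (qd_ee j) = v j := by
    intro j
    refine Fin.cases ?_ (fun i => ?_) j
    · show T (qd_ee 0) = v 0
      rw [show qd_ee 0 = 0 from Fin.cons_zero _ _]
      simp [hT]
    · show T (qd_ee i.succ) = v i.succ
      rw [show qd_ee i.succ = Pi.single i (1:ℝ) from Fin.cons_succ _ _ _]
      have h2 : Llin (Pi.single i (1:ℝ)) = u i := by
        rw [hLapp]
        simp [Pi.single_apply, ite_smul, Finset.sum_ite_eq']
      rw [hT]
      show v 0 + Llin (Pi.single i (1:ℝ)) = v i.succ
      rw [h2, hu]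
      funext k
      simp only [Pi.add_apply, Pi.sub_apply]
      ring
  have hKimg : convexHull ℝ (Set.range v) = T '' qd_SS := by
    have hvA : v = ⇑A ∘ qd_ee := funext fun j => (hAee j).symm
    rw [hvA, Set.range_comp, ← AffineMap.image_convexHull, qd_hull_eq]
    rfl
  set L' : V3 →L[ℝ] V3 := LinearMap.toContinuousLinearMap Llin with hL'
  have hder : ∀ y ∈ qd_SS, HasFDerivWithinAt T L' qd_SS y := by
    intro y _
    have h1 : HasFDerivAt (fun y : V3 => v 0 + Llin y) L' y :=
      (L'.hasFDerivAt (x := y)).const_add (v 0)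
    exact h1.hasFDerivWithinAt
  set D : ℝ := |L'.det| with hD
  have hcov : ∀ g : V3 → ℝ, ∫ x in T '' qd_SS, g x = ∫ y in qd_SS, D • g (T y) := by
    intro g
    exact MeasureTheory.integral_image_eq_integral_abs_det_fderiv_smul volume qd_SS_meas
      (fun y hy => hder y hy) hTinj.injOn g
  -- barycentric coordinates along the parametrization
  have hlamT : ∀ (i : Fin 4) (y : V3),
      lam i (T y) = lam i (v 0) + ∑ j : Fin 3, y j * (lam i (v j.succ) - lam i (v 0)) := by
    intro i y
    rw [hlam i (T y)]
    show dot3 (grad i) (v 0 + Llin y) + cst i = _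
    rw [qd_dot3_add_right, hLapp, qd_dot3_sum_right]
    have hterm : ∀ j : Fin 3,
        dot3 (grad i) (y j • u j) = y j * (lam i (v j.succ) - lam i (v 0)) := by
      intro j
      rw [qd_dot3_smul_right, hu]
      show y j * dot3 (grad i) (v j.succ - v 0) = _
      rw [qd_dot3_sub_right,
        show dot3 (grad i) (v j.succ) = lam i (v j.succ) - cst i from by rw [hlam]; ring,
        show dot3 (grad i) (v 0) = lam i (v 0) - cst i from by rw [hlam]; ring]
      ring
    rw [Finset.sum_congr rfl (fun j _ => hterm j),
      show dot3 (grad i) (v 0) = lam i (v 0) - cst i from by rw [hlam]; ring]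
    ring
  have hc0 : ∀ y : V3, lam 0 (T y) = 1 - (y 0 + y 1 + y 2) := by
    intro y
    rw [hlamT, Fin.sum_univ_three, show ((0:Fin 3).succ) = (1:Fin 4) from rfl,
      show ((1:Fin 3).succ) = (2:Fin 4) from rfl, show ((2:Fin 3).succ) = (3:Fin 4) from rfl,
      hdelta 0 0, hdelta 0 1, hdelta 0 2, hdelta 0 3,
      if_pos rfl, if_neg (by decide), if_neg (by decide), if_neg (by decide)]
    ring
  have hc1 : ∀ y : V3, lam 1 (T y) = y 0 := by
    intro y
    rw [hlamT, Fin.sum_univ_three, show ((0:Fin 3).succ) = (1:Fin 4) from rfl,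
      show ((1:Fin 3).succ) = (2:Fin 4) from rfl, show ((2:Fin 3).succ) = (3:Fin 4) from rfl,
      hdelta 1 0, hdelta 1 1, hdelta 1 2, hdelta 1 3,
      if_pos rfl, if_neg (by decide), if_neg (by decide), if_neg (by decide)]
    ring
  have hc2 : ∀ y : V3, lam 2 (T y) = y 1 := by
    intro y
    rw [hlamT, Fin.sum_univ_three, show ((0:Fin 3).succ) = (1:Fin 4) from rfl,
      show ((1:Fin 3).succ) = (2:Fin 4) from rfl, show ((2:Fin 3).succ) = (3:Fin 4) from rfl,
      hdelta 2 0, hdelta 2 1, hdelta 2 2, hdelta 2 3,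
      if_pos rfl, if_neg (by decide), if_neg (by decide), if_neg (by decide)]
    ring
  have hQT : ∀ y : V3,
      lam 0 (T y) * lam 1 (T y) * lam 2 (T y) * (1 + lam 1 (T y) - lam 0 (T y))
        = qd_g (y 0) (y 1) (y 2) := by
    intro y
    rw [hc0, hc1, hc2]
    simp only [qd_g]
    ring
  -- the two integral computations
  have hIQ : (∫ x in convexHull ℝ (Set.range v),
      lam 0 x * lam 1 x * lam 2 x * (1 + lam 1 x - lam 0 x)) = D * (1/720) := by
    rw [hKimg, hcov]
    simp only [hQT]
    rw [MeasureTheory.integral_smul, qd_int_SS_g, smul_eq_mul]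
  have hvolK : (volume (convexHull ℝ (Set.range v))).toReal = D * (1/6) := by
    have h1 : (volume (convexHull ℝ (Set.range v))).toReal
        = ∫ x in convexHull ℝ (Set.range v), (1:ℝ) := by
      rw [MeasureTheory.setIntegral_const]; simp [Measure.real]
    rw [h1, hKimg, hcov]
    simp only [smul_eq_mul, mul_one]
    rw [MeasureTheory.setIntegral_const, measureReal_def, qd_vol_SS, smul_eq_mul]
    ring
  -- assembling everything
  have hLHS : (∫ x in convexHull ℝ (Set.range v), dot3 c (w4s x))
      = D * (1/720) * dot3 c (grad 3) := by
    have hpt : ∀ x : V3, dot3 c (w4s x)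
        = (lam 0 x * lam 1 x * lam 2 x * (1 + lam 1 x - lam 0 x)) * dot3 c (grad 3) := by
      intro x; rw [hw4s, qd_dot3_smul_right]
    simp_rw [hpt]
    rw [MeasureTheory.integral_mul_const, hIQ]
  have hsum1 : ∑ i, (1/40 : ℝ) * dot3 c (w4s (v i)) = 0 := by
    simp [hvert]
  rw [hLHS, hsum1, hface, hvolK, zero_add]
  ring
end
end

section
/- The curls of the four modified functions w_1, w_2, w_3, w_4* are linearly independent, where w_ℓ = λ_i λ_j λ_k ∇λ_ℓ for ℓ = 1,2,3 and w_4* = λ_1 λ_2 λ_3 (1 + λ_2 − λ_1) ∇λ_4. -/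
set_option maxRecDepth 8000
set_option maxHeartbeats 800000
noncomputable section
open MeasureTheory Finset

def cross3 (a b : V3) : V3 := fun i => a (i+1) * b (i+2) - a (i+2) * b (i+1)

def dotL (g : V3) : V3 →L[ℝ] ℝ := ∑ i, g i • (ContinuousLinearMap.proj i)

lemma dotL_apply (g x : V3) : dotL g x = dot3 g x := by
  simp [dotL, dot3, ContinuousLinearMap.sum_apply]

lemma triple_ne_zero (a b c : V3) (u : Fin 3 → V3)
    (h : ∀ i j : Fin 3, dot3 (![a, b, c] i) (u j) = if i = j then 1 else 0) :
    dot3 (cross3 a b) c ≠ 0 := by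
  set G : Matrix (Fin 3) (Fin 3) ℝ := Matrix.of ![a, b, c] with hG
  set U : Matrix (Fin 3) (Fin 3) ℝ := Matrix.of (fun i j => u j i) with hU
  have hGU : G * U = 1 := by
    ext i j
    have h' := h i j
    simp only [dot3] at h'
    simpa [Matrix.mul_apply, hG, hU, Matrix.one_apply] using h'
  have hdet : G.det * U.det = 1 := by rw [← Matrix.det_mul, hGU, Matrix.det_one]
  have hGdet : G.det ≠ 0 := by
    intro h0; rw [h0, zero_mul] at hdet; exact zero_ne_one hdet
  have : dot3 (cross3 a b) c = G.det := by
    rw [Matrix.det_fin_three]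
    simp [dot3, cross3, hG, Fin.sum_univ_three, Matrix.of_apply]
    ring
  rw [this]; exact hGdet

lemma curl3_smul (p : V3 → ℝ) (D : V3 →L[ℝ] ℝ) (gv : V3) (x : V3)
    (hp : HasFDerivAt p D x) :
    curl3 (fun y => p y • gv) x
      = cross3 (fun j => D (fun k => if k = j then (1:ℝ) else 0)) gv := by
  have key : ∀ (i' j : Fin 3),
      pd (fun y => p y * gv i') j x
        = gv i' * D (fun k => if k = j then (1:ℝ) else 0) := by
    intro i' j
    rw [pd, (hp.mul_const (gv i')).fderiv]
    simp [mul_comm]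
  funext i
  fin_cases i <;>
    simp [curl3, key, cross3] <;> ring
/-- The curls of the four modified functions `w_1, w_2, w_3, w_4*` are linearly
independent. -/
theorem stmt_6 (v : Fin 4 → V3) (hv : AffineIndependent ℝ v)
    (lam : Fin 4 → V3 → ℝ) (grad : Fin 4 → V3) (c : Fin 4 → ℝ)
    (hlam : ∀ i x, lam i x = dot3 (grad i) x + c i)
    (hdelta : ∀ i j, lam i (v j) = if i = j then (1:ℝ) else 0)
    (hsum : ∀ x, ∑ i, lam i x = 1)
    (w : Fin 4 → V3 → V3)
    (hw : ∀ ℓ : Fin 4, ℓ ≠ 3 → ∀ x, w ℓ x = (∏ m ∈ univ.erase ℓ, lam m x) • grad ℓ)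
    (hw4 : ∀ x, w 3 x =
      (lam 0 x * lam 1 x * lam 2 x * (1 + lam 1 x - lam 0 x)) • grad 3) :
    LinearIndependent ℝ (fun ℓ : Fin 4 => fun x => curl3 (w ℓ) x) := by
  have hL : ∀ (k : Fin 4) (x : V3), HasFDerivAt (lam k) (dotL (grad k)) x := by
    intro k x
    have hfun : lam k = fun y => dotL (grad k) y + c k := by
      funext y; rw [hlam, dotL_apply]
    rw [hfun]
    exact ((dotL (grad k)).hasFDerivAt).add_const (c k)
  have hdotLe : ∀ (gv : V3) (j : Fin 3),
      dotL gv (fun k => if k = j then (1:ℝ) else 0) = gv j := by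
    intro gv j
    rw [dotL_apply]
    simp [dot3, mul_ite]
  have hp0 : ∀ y, (∏ m ∈ univ.erase (0:Fin 4), lam m y) = lam 1 y * lam 2 y * lam 3 y := by
    intro y
    have h : (univ.erase (0:Fin 4)) = {1, 2, 3} := by decide
    rw [h, Finset.prod_insert (by decide), Finset.prod_insert (by decide),
      Finset.prod_singleton, ← mul_assoc]
  have hp1 : ∀ y, (∏ m ∈ univ.erase (1:Fin 4), lam m y) = lam 0 y * lam 2 y * lam 3 y := by
    intro y
    have h : (univ.erase (1:Fin 4)) = {0, 2, 3} := by decide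
    rw [h, Finset.prod_insert (by decide), Finset.prod_insert (by decide),
      Finset.prod_singleton, ← mul_assoc]
  have hp2 : ∀ y, (∏ m ∈ univ.erase (2:Fin 4), lam m y) = lam 0 y * lam 1 y * lam 3 y := by
    intro y
    have h : (univ.erase (2:Fin 4)) = {0, 1, 3} := by decide
    rw [h, Finset.prod_insert (by decide), Finset.prod_insert (by decide),
      Finset.prod_singleton, ← mul_assoc]
  have w0eq : w 0 = fun y => (lam 1 y * lam 2 y * lam 3 y) • grad 0 :=
    funext fun y => by rw [hw 0 (by decide) y, hp0]
  have w1eq : w 1 = fun y => (lam 0 y * lam 2 y * lam 3 y) • grad 1 :=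
    funext fun y => by rw [hw 1 (by decide) y, hp1]
  have w2eq : w 2 = fun y => (lam 0 y * lam 1 y * lam 3 y) • grad 2 :=
    funext fun y => by rw [hw 2 (by decide) y, hp2]
  have w3eq : w 3 = fun y => (lam 0 y * lam 1 y * lam 2 y * (1 + lam 1 y - lam 0 y)) • grad 3 :=
    funext fun y => hw4 y
  have hc0 : ∀ x, curl3 (w 0) x
      = cross3 (fun j => lam 2 x * lam 3 x * grad 1 j + lam 1 x * lam 3 x * grad 2 j
          + lam 1 x * lam 2 x * grad 3 j) (grad 0) := by
    intro x
    rw [w0eq, curl3_smul (fun y => lam 1 y * lam 2 y * lam 3 y) _ _ _ (((hL 1 x).mul (hL 2 x)).mul (hL 3 x))]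
    funext i
    simp only [cross3, ContinuousLinearMap.add_apply, ContinuousLinearMap.smul_apply,
      hdotLe, smul_eq_mul, Pi.mul_apply]
    ring
  have hc1 : ∀ x, curl3 (w 1) x
      = cross3 (fun j => lam 2 x * lam 3 x * grad 0 j + lam 0 x * lam 3 x * grad 2 j
          + lam 0 x * lam 2 x * grad 3 j) (grad 1) := by
    intro x
    rw [w1eq, curl3_smul (fun y => lam 0 y * lam 2 y * lam 3 y) _ _ _ (((hL 0 x).mul (hL 2 x)).mul (hL 3 x))]
    funext i
    simp only [cross3, ContinuousLinearMap.add_apply, ContinuousLinearMap.smul_apply,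
      hdotLe, smul_eq_mul, Pi.mul_apply]
    ring
  have hc2 : ∀ x, curl3 (w 2) x
      = cross3 (fun j => lam 1 x * lam 3 x * grad 0 j + lam 0 x * lam 3 x * grad 1 j
          + lam 0 x * lam 1 x * grad 3 j) (grad 2) := by
    intro x
    rw [w2eq, curl3_smul (fun y => lam 0 y * lam 1 y * lam 3 y) _ _ _ (((hL 0 x).mul (hL 1 x)).mul (hL 3 x))]
    funext i
    simp only [cross3, ContinuousLinearMap.add_apply, ContinuousLinearMap.smul_apply,
      hdotLe, smul_eq_mul, Pi.mul_apply]
    ring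
  have hc3 : ∀ x, curl3 (w 3) x
      = cross3 (fun j => (1 + lam 1 x - lam 0 x) *
            (lam 1 x * lam 2 x * grad 0 j + lam 0 x * lam 2 x * grad 1 j
              + lam 0 x * lam 1 x * grad 2 j)
          + lam 0 x * lam 1 x * lam 2 x * (grad 1 j - grad 0 j)) (grad 3) := by
    intro x
    have hq : HasFDerivAt (fun y => 1 + lam 1 y - lam 0 y)
        (dotL (grad 1) - dotL (grad 0)) x := ((hL 1 x).const_add 1).sub (hL 0 x)
    rw [w3eq, curl3_smul (fun y => lam 0 y * lam 1 y * lam 2 y * (1 + lam 1 y - lam 0 y)) _ _ _ ((((hL 0 x).mul (hL 1 x)).mul (hL 2 x)).mul hq)]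
    funext i
    simp only [cross3, ContinuousLinearMap.add_apply, ContinuousLinearMap.smul_apply,
      ContinuousLinearMap.sub_apply, hdotLe, smul_eq_mul, Pi.mul_apply]
    ring
  have lam_mid : ∀ (m p q : Fin 4), lam m (fun k => (v p k + v q k)/2)
      = ((if m = p then (1:ℝ) else 0) + (if m = q then 1 else 0))/2 := by
    intro m p q
    have hsplit : dot3 (grad m) (fun k => (v p k + v q k)/2)
        = (dot3 (grad m) (v p) + dot3 (grad m) (v q))/2 := by
      simp only [dot3, Fin.sum_univ_three]; ring
    have e1 : dot3 (grad m) (v p) = lam m (v p) - c m := by rw [hlam]; ring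
    have e2 : dot3 (grad m) (v q) = lam m (v q) - c m := by rw [hlam]; ring
    rw [hlam, hsplit, e1, e2, hdelta, hdelta]; ring
  have hdual : ∀ (m p q : Fin 4), dot3 (grad m) (fun k => v p k - v q k)
      = (if m = p then (1:ℝ) else 0) - (if m = q then 1 else 0) := by
    intro m p q
    have hsplit : dot3 (grad m) (fun k => v p k - v q k)
        = dot3 (grad m) (v p) - dot3 (grad m) (v q) := by
      simp only [dot3, Fin.sum_univ_three]; ring
    have e1 : dot3 (grad m) (v p) = lam m (v p) - c m := by rw [hlam]; ring
    have e2 : dot3 (grad m) (v q) = lam m (v q) - c m := by rw [hlam]; ring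
    rw [hsplit, e1, e2, hdelta, hdelta]; ring
  have T123 : dot3 (cross3 (grad 1) (grad 2)) (grad 3) ≠ 0 := by
    apply triple_ne_zero _ _ _ ![(fun k => v 1 k - v 0 k), (fun k => v 2 k - v 0 k), (fun k => v 3 k - v 0 k)]
    intro i j
    fin_cases i <;> fin_cases j <;> (norm_num [hdual, Fin.ext_iff, show ((3:Fin 4):ℕ) = 3 from rfl, show ((2:Fin 4):ℕ) = 2 from rfl, show ((1:Fin 4):ℕ) = 1 from rfl, show ((0:Fin 4):ℕ) = 0 from rfl]; try decide)
  have T021 : dot3 (cross3 (grad 0) (grad 2)) (grad 1) ≠ 0 := by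
    apply triple_ne_zero _ _ _ ![(fun k => v 0 k - v 3 k), (fun k => v 2 k - v 3 k), (fun k => v 1 k - v 3 k)]
    intro i j
    fin_cases i <;> fin_cases j <;> (norm_num [hdual, Fin.ext_iff, show ((3:Fin 4):ℕ) = 3 from rfl, show ((2:Fin 4):ℕ) = 2 from rfl, show ((1:Fin 4):ℕ) = 1 from rfl, show ((0:Fin 4):ℕ) = 0 from rfl]; try decide)
  have T230 : dot3 (cross3 (grad 2) (grad 3)) (grad 0) ≠ 0 := by
    apply triple_ne_zero _ _ _ ![(fun k => v 2 k - v 1 k), (fun k => v 3 k - v 1 k), (fun k => v 0 k - v 1 k)]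
    intro i j
    fin_cases i <;> fin_cases j <;> (norm_num [hdual, Fin.ext_iff, show ((3:Fin 4):ℕ) = 3 from rfl, show ((2:Fin 4):ℕ) = 2 from rfl, show ((1:Fin 4):ℕ) = 1 from rfl, show ((0:Fin 4):ℕ) = 0 from rfl]; try decide)
  have T130 : dot3 (cross3 (grad 1) (grad 3)) (grad 0) ≠ 0 := by
    apply triple_ne_zero _ _ _ ![(fun k => v 1 k - v 2 k), (fun k => v 3 k - v 2 k), (fun k => v 0 k - v 2 k)]
    intro i j
    fin_cases i <;> fin_cases j <;> (norm_num [hdual, Fin.ext_iff, show ((3:Fin 4):ℕ) = 3 from rfl, show ((2:Fin 4):ℕ) = 2 from rfl, show ((1:Fin 4):ℕ) = 1 from rfl, show ((0:Fin 4):ℕ) = 0 from rfl]; try decide)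
  rw [Fintype.linearIndependent_iff]
  intro a ha
  have E : ∀ (x : V3) (i : Fin 3), a 0 * curl3 (w 0) x i + a 1 * curl3 (w 1) x i
      + a 2 * curl3 (w 2) x i + a 3 * curl3 (w 3) x i = 0 := by
    intro x i
    have hx := congrFun (congrFun ha x) i
    simpa [Fin.sum_univ_four, Pi.smul_apply, smul_eq_mul, add_assoc] using hx
  have key1 : a 2 - a 1 = 0 := by
    have h0 := E (fun k => (v 0 k + v 3 k)/2) 0
    have h1 := E (fun k => (v 0 k + v 3 k)/2) 1
    have h2 := E (fun k => (v 0 k + v 3 k)/2) 2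
    simp only [hc0, hc1, hc2, hc3, lam_mid, cross3, Fin.reduceAdd] at h0 h1 h2
    norm_num [Fin.ext_iff, show ((3:Fin 4):ℕ) = 3 from rfl, show ((2:Fin 4):ℕ) = 2 from rfl, show ((1:Fin 4):ℕ) = 1 from rfl, show ((0:Fin 4):ℕ) = 0 from rfl] at h0 h1 h2
    have hcomb : (a 2 - a 1) * dot3 (cross3 (grad 1) (grad 2)) (grad 3) = 0 := by
      simp only [dot3, cross3, Fin.sum_univ_three, Fin.reduceAdd]
      linear_combination (4:ℝ)*grad 3 0 * h0 + 4*grad 3 1 * h1 + 4*grad 3 2 * h2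
    rcases mul_eq_zero.mp hcomb with h | h
    · exact h
    · exact absurd h T123
  have key2 : a 2 - a 0 = 0 := by
    have h0 := E (fun k => (v 1 k + v 3 k)/2) 0
    have h1 := E (fun k => (v 1 k + v 3 k)/2) 1
    have h2 := E (fun k => (v 1 k + v 3 k)/2) 2
    simp only [hc0, hc1, hc2, hc3, lam_mid, cross3, Fin.reduceAdd] at h0 h1 h2
    norm_num [Fin.ext_iff, show ((3:Fin 4):ℕ) = 3 from rfl, show ((2:Fin 4):ℕ) = 2 from rfl, show ((1:Fin 4):ℕ) = 1 from rfl, show ((0:Fin 4):ℕ) = 0 from rfl] at h0 h1 h2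
    have hcomb : (a 2 - a 0) * dot3 (cross3 (grad 0) (grad 2)) (grad 1) = 0 := by
      simp only [dot3, cross3, Fin.sum_univ_three, Fin.reduceAdd]
      linear_combination (4:ℝ)*grad 1 0 * h0 + 4*grad 1 1 * h1 + 4*grad 1 2 * h2
    rcases mul_eq_zero.mp hcomb with h | h
    · exact h
    · exact absurd h T021
  have key3 : a 3 - a 2 = 0 := by
    have h0 := E (fun k => (v 0 k + v 1 k)/2) 0
    have h1 := E (fun k => (v 0 k + v 1 k)/2) 1
    have h2 := E (fun k => (v 0 k + v 1 k)/2) 2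
    simp only [hc0, hc1, hc2, hc3, lam_mid, cross3, Fin.reduceAdd] at h0 h1 h2
    norm_num [Fin.ext_iff, show ((3:Fin 4):ℕ) = 3 from rfl, show ((2:Fin 4):ℕ) = 2 from rfl, show ((1:Fin 4):ℕ) = 1 from rfl, show ((0:Fin 4):ℕ) = 0 from rfl] at h0 h1 h2
    have hcomb : (a 3 - a 2) * dot3 (cross3 (grad 2) (grad 3)) (grad 0) = 0 := by
      simp only [dot3, cross3, Fin.sum_univ_three, Fin.reduceAdd]
      linear_combination (4:ℝ)*grad 0 0 * h0 + 4*grad 0 1 * h1 + 4*grad 0 2 * h2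
    rcases mul_eq_zero.mp hcomb with h | h
    · exact h
    · exact absurd h T230
  have key4 : a 3 - 2 * a 1 = 0 := by
    have h0 := E (fun k => (v 0 k + v 2 k)/2) 0
    have h1 := E (fun k => (v 0 k + v 2 k)/2) 1
    have h2 := E (fun k => (v 0 k + v 2 k)/2) 2
    simp only [hc0, hc1, hc2, hc3, lam_mid, cross3, Fin.reduceAdd] at h0 h1 h2
    norm_num [Fin.ext_iff, show ((3:Fin 4):ℕ) = 3 from rfl, show ((2:Fin 4):ℕ) = 2 from rfl, show ((1:Fin 4):ℕ) = 1 from rfl, show ((0:Fin 4):ℕ) = 0 from rfl] at h0 h1 h2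
    have hcomb : (a 3 - 2 * a 1) * dot3 (cross3 (grad 1) (grad 3)) (grad 0) = 0 := by
      simp only [dot3, cross3, Fin.sum_univ_three, Fin.reduceAdd]
      linear_combination (8:ℝ)*grad 0 0 * h0 + 8*grad 0 1 * h1 + 8*grad 0 2 * h2
    rcases mul_eq_zero.mp hcomb with h | h
    · exact h
    · exact absurd h T130
  have e1 : a 1 = 0 := by linarith
  have e0 : a 0 = 0 := by linarith
  have e2 : a 2 = 0 := by linarith
  have e3 : a 3 = 0 := by linarith
  intro ℓ
  fin_cases ℓ
  exacts [e0, e1, e2, e3]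
end
end

section
/- For the leapfrog scheme a^{n+1} − 2a^n + a^{n-1} = −τ² M^{-1} K a^n + τ² M^{-1} g^n with symmetric positive definite M and symmetric positive semidefinite K, the discrete energy E^{n+1/2} := (1/2)| (a^{n+1}−a^n)/τ |_M² + (1/2)⟨K (a^{n+1}+a^n)/2, (a^{n+1}+a^n)/2⟩ − (τ²/8)⟨K (a^{n+1}−a^n)/τ, (a^{n+1}−a^n)/τ⟩ satisfies E^{n+1/2} − E^{n-1/2} = τ ⟨g^n, (a^{n+1}−a^{n-1})/(2τ)⟩. -/
open scoped Matrix

noncomputable def dotN {N : ℕ} (a b : Fin N → ℝ) : ℝ := ∑ i, a i * b i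

lemma dotN_eq {N : ℕ} (a b : Fin N → ℝ) : dotN a b = a ⬝ᵥ b := rfl

lemma symm_dot {N : ℕ} {S : Matrix (Fin N) (Fin N) ℝ} (hS : S.IsSymm)
    (x y : Fin N → ℝ) : x ⬝ᵥ (S *ᵥ y) = y ⬝ᵥ (S *ᵥ x) := by
  rw [Matrix.dotProduct_mulVec, ← Matrix.mulVec_transpose, hS, dotProduct_comm]

/-- Discrete energy identity for the leapfrog scheme: with
`M (aⁿ⁺¹ - 2aⁿ + aⁿ⁻¹)/τ² + K aⁿ = gⁿ`, the discrete energy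
`E^{n+1/2} = (1/2)|Dₜaⁿ⁺½|²_M + (1/2)⟨K âⁿ⁺½, âⁿ⁺½⟩ − (τ²/8)⟨K Dₜaⁿ⁺½, Dₜaⁿ⁺½⟩`
satisfies `E^{n+1/2} − E^{n−1/2} = τ⟨gⁿ, (aⁿ⁺¹−aⁿ⁻¹)/(2τ)⟩`. -/
theorem stmt_15 {N : ℕ} (hN : 1 ≤ N)
    (M K : Matrix (Fin N) (Fin N) ℝ)
    (hM : M.PosDef) (hK : K.PosSemidef)
    (τ : ℝ) (hτ : 0 < τ)
    (a g : ℕ → Fin N → ℝ)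
    (hscheme : ∀ n : ℕ, 1 ≤ n →
      (1 / τ ^ 2) • M.mulVec (a (n+1) - (2:ℝ) • a n + a (n-1)) + K.mulVec (a n)
        = g n)
    (E : ℕ → ℝ)
    (hE : ∀ n : ℕ, E n =
      (1/2) * dotN ((1/τ) • (a (n+1) - a n)) (M.mulVec ((1/τ) • (a (n+1) - a n)))
      + (1/2) * dotN (K.mulVec ((1/2 : ℝ) • (a (n+1) + a n)))
          ((1/2 : ℝ) • (a (n+1) + a n))
      - (τ ^ 2 / 8) * dotN (K.mulVec ((1/τ) • (a (n+1) - a n)))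
          ((1/τ) • (a (n+1) - a n))) :
    ∀ n : ℕ, 1 ≤ n →
      E n - E (n - 1) = τ * dotN (g n) ((1 / (2 * τ)) • (a (n+1) - a (n-1))) := by
  intro n hn
  obtain ⟨m, rfl⟩ : ∃ m, n = m + 1 := ⟨n - 1, (Nat.succ_pred_eq_of_pos hn).symm⟩
  have hg := hscheme (m + 1) (by omega)
  simp only [Nat.add_sub_cancel] at hg ⊢
  rw [hE (m + 1), hE m, ← hg]
  have hτ' : τ ≠ 0 := ne_of_gt hτ
  set p := a (m + 1 + 1) with hp
  set q := a (m + 1) with hq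
  set r := a m with hr
  simp only [dotN_eq, Matrix.mulVec_add, Matrix.mulVec_sub, Matrix.mulVec_smul,
    dotProduct_add, add_dotProduct, dotProduct_sub,
    sub_dotProduct, dotProduct_smul, smul_dotProduct,
    smul_eq_mul, dotProduct_comm (M *ᵥ p), dotProduct_comm (M *ᵥ q),
    dotProduct_comm (M *ᵥ r), dotProduct_comm (K *ᵥ p),
    dotProduct_comm (K *ᵥ q), dotProduct_comm (K *ᵥ r)]
  have hMs : M.IsSymm := by simpa using hM.1
  have hKs : K.IsSymm := by simpa using hK.1
  rw [symm_dot hMs q p, symm_dot hMs r p, symm_dot hMs r q, symm_dot hKs q p, symm_dot hKs q r]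
  field_simp
  ring
end
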